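/- Consider two jointly Gaussian scalar estimates v̂^1 = α(V + W^1) and v̂^2 = β(V + W^2) with V ~ N(0,σ²), W^i ~ N(0,q_i) mutually independent, α = σ²/(σ²+q_1), β = σ²/(σ²+q_2). Then E[v̂^2 | v̂^1] = β v̂^1, and iterating, E[ E[v̂^1 | X^2] | X^1 ] = α β v̂^1; hence the infinite hierarchy of estimates-of-estimates is generated by v̂^1 via multiplication by fixed public scalars. -/

import Mathlib

/-!
Gaussian regression: if `(X, Y)` is jointly Gaussian and `c = Cov(Y, X) / Var X`, the residual
`Y - c X` is uncorrelated with `X`, hence independent of it, so `E[Y | X] = E Y + c (X - E X)`.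
For `X^i = V + W^i` with independent centred Gaussians, `Cov(X^2, X^1) = σ²` and
`Var X^1 = σ² + q_1`, so `E[X^2 | X^1] = α X^1`, and symmetrically `E[X^1 | X^2] = β X^2`.
Both identities follow by linearity of conditional expectation, since multiplying `X^1` by the
nonzero constant `α` does not change the σ-algebra it generates.
-/

open MeasureTheory ProbabilityTheory
open scoped NNReal

lemma MeasurableSpace.comap_const_mul {α G₀ : Type*} [GroupWithZero G₀] [MeasurableSpace G₀]
    [MeasurableMul G₀] (X : α → G₀) {c : G₀} (hc : c ≠ 0) :
    MeasurableSpace.comap (fun a ↦ c * X a) inferInstance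
      = MeasurableSpace.comap X inferInstance := by
  rw [show (fun a ↦ c * X a) = (c * ·) ∘ X from rfl, ← MeasurableSpace.comap_comp,
    (measurableEmbedding_mulLeft₀ hc).comap_eq]

namespace MeasureTheory

lemma condExp_const_mul_of_ae_eq {Ω : Type*} {m mΩ : MeasurableSpace Ω} {P : Measure Ω}
    {f g : Ω → ℝ} (c : ℝ) (h : P[f | m] =ᵐ[P] g) :
    P[fun ω ↦ c * f ω | m] =ᵐ[P] fun ω ↦ c * g ω := by
  filter_upwards [condExp_smul c f m, h] with ω h₁ h₂
  rw [← smul_eq_mul, ← h₂]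
  exact h₁

end MeasureTheory

namespace ProbabilityTheory

variable {Ω : Type*} {mΩ : MeasurableSpace Ω} {P : Measure Ω}

lemma integral_add_eq_zero_of_hasLaw_gaussianReal {U U' : Ω → ℝ} {u u' : ℝ≥0}
    (hU : HasLaw U (gaussianReal 0 u) P) (hU' : HasLaw U' (gaussianReal 0 u') P) :
    P[fun ω ↦ U ω + U' ω] = 0 := by
  rw [integral_add hU.hasGaussianLaw.integrable hU'.hasGaussianLaw.integrable, hU.integral_eq,
    hU'.integral_eq, integral_id_gaussianReal, integral_id_gaussianReal, add_zero]

variable [IsProbabilityMeasure P]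

lemma HasGaussianLaw.condExp_comap_eq_linear {X Y : Ω → ℝ}
    (hXY : HasGaussianLaw (fun ω ↦ (X ω, Y ω)) P) (hX : Measurable X) (hY : Measurable Y)
    {c : ℝ} (hc : cov[Y, X; P] = c * Var[X; P]) :
    P[Y | MeasurableSpace.comap X inferInstance] =ᵐ[P] fun ω ↦ P[Y] + c * (X ω - P[X]) := by
  set R : Ω → ℝ := fun ω ↦ Y ω - c * X ω with hR
  have hX2 : MemLp X 2 P := hXY.fst.memLp_two
  have hY2 : MemLp Y 2 P := hXY.snd.memLp_two
  have hcX : Integrable (fun ω ↦ c * X ω) P := (hX2.integrable one_le_two).const_mul c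
  have hRX : HasGaussianLaw (fun ω ↦ (R ω, X ω)) P := by
    simpa using hXY.map_fun (((ContinuousLinearMap.snd ℝ ℝ ℝ) -
      c • ContinuousLinearMap.fst ℝ ℝ ℝ).prod (ContinuousLinearMap.fst ℝ ℝ ℝ))
  have hcov : cov[R, X; P] = 0 := by
    rw [hR, covariance_fun_sub_left hY2 (hX2.const_mul c) hX2, covariance_const_mul_left,
      covariance_self hX.aemeasurable, hc, sub_self]
  have hR_cond : P[R | MeasurableSpace.comap X inferInstance] =ᵐ[P] fun _ ↦ P[R] :=
    condExp_indep_eq (hY.sub (hX.const_mul c)).comap_le hX.comap_le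
      (Measurable.of_comap_le le_rfl).stronglyMeasurable
      (hRX.indepFun_of_covariance_eq_zero hcov)
  have hcX_cond :
      P[fun ω ↦ c * X ω | MeasurableSpace.comap X inferInstance] = fun ω ↦ c * X ω :=
    condExp_of_stronglyMeasurable hX.comap_le
      ((Measurable.of_comap_le le_rfl).const_mul c).stronglyMeasurable hcX
  have hR_mean : P[R] = P[Y] - c * P[X] := by
    rw [hR, integral_sub (hY2.integrable one_le_two) hcX, integral_const_mul]
  have hR_int : Integrable R P := (hY2.integrable one_le_two).sub hcX
  have hY_eq : Y = R + fun ω ↦ c * X ω := by ext ω; simp [hR]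
  nth_rw 1 [hY_eq]
  filter_upwards [condExp_add (m := MeasurableSpace.comap X inferInstance) hR_int hcX, hR_cond]
    with ω h₁ h₂
  rw [h₁, Pi.add_apply, h₂, hcX_cond, hR_mean]
  ring

lemma condExp_add_comap_add_of_gaussianReal {V W W' : Ω → ℝ} {s q q' : ℝ≥0}
    (hVm : Measurable V) (hWm : Measurable W) (hW'm : Measurable W')
    (hV : HasLaw V (gaussianReal 0 s) P) (hW : HasLaw W (gaussianReal 0 q) P)
    (hW' : HasLaw W' (gaussianReal 0 q') P) (hind : iIndepFun ![V, W, W'] P) :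
    P[fun ω ↦ V ω + W' ω | MeasurableSpace.comap (fun ω ↦ V ω + W ω) inferInstance]
      =ᵐ[P] fun ω ↦ (s / (s + q) : ℝ) * (V ω + W ω) := by
  have hG : HasGaussianLaw (fun ω (i : Fin 3) ↦ ![V, W, W'] i ω) P :=
    hind.hasGaussianLaw fun i ↦ by
      fin_cases i
      exacts [hV.hasGaussianLaw, hW.hasGaussianLaw, hW'.hasGaussianLaw]
  have hXY : HasGaussianLaw (fun ω ↦ (V ω + W ω, V ω + W' ω)) P := by
    let π (i : Fin 3) : (Fin 3 → ℝ) →L[ℝ] ℝ := ContinuousLinearMap.proj i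
    exact hG.map_fun (ContinuousLinearMap.prod (π 0 + π 1) (π 0 + π 2))
  have hVW : IndepFun V W P := by simpa using hind.indepFun (i := 0) (j := 1) (by decide)
  have hVW' : IndepFun V W' P := by simpa using hind.indepFun (i := 0) (j := 2) (by decide)
  have hWW' : IndepFun W W' P := by simpa using hind.indepFun (i := 1) (j := 2) (by decide)
  have hV2 : MemLp V 2 P := hV.hasGaussianLaw.memLp_two
  have hW2 : MemLp W 2 P := hW.hasGaussianLaw.memLp_two
  have hW'2 : MemLp W' 2 P := hW'.hasGaussianLaw.memLp_two
  have hcov : cov[fun ω ↦ V ω + W' ω, fun ω ↦ V ω + W ω; P] = s := by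
    change cov[V + W', V + W; P] = s
    rw [covariance_add_left hV2 hW'2 (hV2.add hW2), covariance_add_right hV2 hV2 hW2,
      covariance_add_right hW'2 hV2 hW2, hVW.covariance_eq_zero hV2 hW2,
      hVW'.symm.covariance_eq_zero hW'2 hV2, hWW'.symm.covariance_eq_zero hW'2 hW2,
      covariance_self hVm.aemeasurable, hV.variance_eq, variance_id_gaussianReal]
    ring
  have hvar : Var[fun ω ↦ V ω + W ω; P] = s + q := by
    rw [hVW.variance_fun_add hV2 hW2, hV.variance_eq, hW.variance_eq, variance_id_gaussianReal,
      variance_id_gaussianReal]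
  have hc : cov[fun ω ↦ V ω + W' ω, fun ω ↦ V ω + W ω; P]
      = (s / (s + q) : ℝ) * Var[fun ω ↦ V ω + W ω; P] := by
    rw [hcov, hvar]
    exact (div_mul_cancel_of_imp fun h ↦ by linarith [s.coe_nonneg, q.coe_nonneg]).symm
  filter_upwards [hXY.condExp_comap_eq_linear (X := fun ω ↦ V ω + W ω)
    (Y := fun ω ↦ V ω + W' ω) (hVm.add hWm) (hVm.add hW'm) hc] with ω hω
  rw [hω, integral_add_eq_zero_of_hasLaw_gaussianReal hV hW',
    integral_add_eq_zero_of_hasLaw_gaussianReal hV hW]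
  ring

end ProbabilityTheory

theorem stmt18_general {Ω : Type*} [MeasureSpace Ω] [IsProbabilityMeasure (volume : Measure Ω)]
    (V W1 W2 : Ω → ℝ) (s2 q1 q2 : NNReal)
    (hVm : Measurable V) (hW1m : Measurable W1) (hW2m : Measurable W2)
    (hs2 : 0 < (s2 : ℝ))
    (hV : Measure.map V volume = gaussianReal 0 s2)
    (hW1 : Measure.map W1 volume = gaussianReal 0 q1)
    (hW2 : Measure.map W2 volume = gaussianReal 0 q2)
    (hind : iIndepFun ![V, W1, W2] volume)
    (α β : ℝ)
    (hα : α = (s2 : ℝ) / ((s2 : ℝ) + q1)) (hβ : β = (s2 : ℝ) / ((s2 : ℝ) + q2)) :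
    ((volume[fun ω => β * (V ω + W2 ω) |
        MeasurableSpace.comap (fun ω => α * (V ω + W1 ω)) inferInstance])
      =ᵐ[volume] fun ω => β * (α * (V ω + W1 ω))) ∧
    ((volume[(volume[fun ω => α * (V ω + W1 ω) |
          MeasurableSpace.comap (fun ω => V ω + W2 ω) inferInstance]) |
        MeasurableSpace.comap (fun ω => V ω + W1 ω) inferInstance])
      =ᵐ[volume] fun ω => α * β * (α * (V ω + W1 ω))) := by
  have hα_ne : α ≠ 0 :=
    hα ▸ div_ne_zero hs2.ne' (add_pos_of_pos_of_nonneg hs2 q1.coe_nonneg).ne'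
  have hind_swap : iIndepFun ![V, W2, W1] volume := by
    convert hind.precomp (Equiv.swap (1 : Fin 3) 2).injective using 1
    ext i : 1
    fin_cases i <;> rfl
  have h12 := hα ▸ condExp_add_comap_add_of_gaussianReal hVm hW1m hW2m ⟨hVm.aemeasurable, hV⟩
    ⟨hW1m.aemeasurable, hW1⟩ ⟨hW2m.aemeasurable, hW2⟩ hind
  have h21 := hβ ▸ condExp_add_comap_add_of_gaussianReal hVm hW2m hW1m ⟨hVm.aemeasurable, hV⟩
    ⟨hW2m.aemeasurable, hW2⟩ ⟨hW1m.aemeasurable, hW1⟩ hind_swap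
  refine ⟨?_, ?_⟩
  · rw [MeasurableSpace.comap_const_mul _ hα_ne]
    exact condExp_const_mul_of_ae_eq β h12
  · have hinner : volume[fun ω ↦ α * (V ω + W1 ω) |
        MeasurableSpace.comap (fun ω ↦ V ω + W2 ω) inferInstance]
        =ᵐ[volume] fun ω ↦ α * β * (V ω + W2 ω) := by
      simpa only [mul_assoc] using condExp_const_mul_of_ae_eq α h21
    filter_upwards [condExp_congr_ae
      (m := MeasurableSpace.comap (fun ω ↦ V ω + W1 ω) inferInstance) hinner,
      condExp_const_mul_of_ae_eq (α * β) h12] with ω h₁ h₂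
    rw [h₁, h₂]

/-- scalar collapse of the hierarchy of estimates. With
`v̂¹ = α(V + W¹)`, `v̂² = β(V + W²)`, `α = σ²/(σ²+q₁)`, `β = σ²/(σ²+q₂)`:
`E[v̂² | v̂¹] = β v̂¹` and `E[ E[v̂¹ | X²] | X¹ ] = αβ v̂¹` a.s. -/
theorem stmt18 {Ω : Type*} [MeasureSpace Ω] [IsProbabilityMeasure (volume : Measure Ω)]
    (V W1 W2 : Ω → ℝ) (s2 q1 q2 : NNReal)
    (hVm : Measurable V) (hW1m : Measurable W1) (hW2m : Measurable W2)
    (hs2 : 0 < (s2 : ℝ)) (hq1 : 0 ≤ (q1 : ℝ)) (hq2 : 0 ≤ (q2 : ℝ))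
    (hV : Measure.map V volume = gaussianReal 0 s2)
    (hW1 : Measure.map W1 volume = gaussianReal 0 q1)
    (hW2 : Measure.map W2 volume = gaussianReal 0 q2)
    (hind : iIndepFun ![V, W1, W2] volume)
    (α β : ℝ)
    (hα : α = (s2 : ℝ) / ((s2 : ℝ) + q1)) (hβ : β = (s2 : ℝ) / ((s2 : ℝ) + q2)) :
    ((volume[fun ω => β * (V ω + W2 ω) |
        MeasurableSpace.comap (fun ω => α * (V ω + W1 ω)) inferInstance])
      =ᵐ[volume] fun ω => β * (α * (V ω + W1 ω))) ∧
    ((volume[(volume[fun ω => α * (V ω + W1 ω) |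
          MeasurableSpace.comap (fun ω => V ω + W2 ω) inferInstance]) |
        MeasurableSpace.comap (fun ω => V ω + W1 ω) inferInstance])
      =ᵐ[volume] fun ω => α * β * (α * (V ω + W1 ω))) :=
  stmt18_general V W1 W2 s2 q1 q2 hVm hW1m hW2m hs2 hV hW1 hW2 hind α β hα hβ
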